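/- (Algebraic form of Bonan's theorem.) Let R : (Fin 7)⁴ → ℝ satisfy the symmetries of a Riemann curvature tensor: R_{abcd} = −R_{bacd} = −R_{abdc} = R_{cdab}, and the first Bianchi identity R_{abcd} + R_{acdb} + R_{adbc} = 0. Suppose moreover that R takes values in Sym²(𝔤₂), i.e. for all indices a, b, e: Σ_{c,d} φ₀_{ecd} R_{abcd} = 0 (each 2-form R_{ab··} lies in Λ²₁₄ ≅ 𝔤₂). Then the Ricci contraction vanishes: Σ_a R_{abad} = 0 for all b, d. -/

import Mathlib

/-!
By the first Bianchi identity, `2 Σ_{cd} ω_{cd} R_{acbd} = Σ_{cd} ω_{cd} R_{abcd}` for every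
2-form `ω`, so the 2-forms `R_{a·b·}` lie in `𝔤₂ = ker (φ₀ ⌟ ·)` as well. Contracting once more
with `φ₀` and using `φ₀_{eab} φ₀_{ecd} = δ_{ac} δ_{bd} - δ_{ad} δ_{bc} + ψ₀_{abcd}` gives
`0 = Σ_a R_{aabd} + Σ_a R_{abad} + Σ ψ₀_{adce} R_{acbe}`. The first sum vanishes by antisymmetry
and the last by the Bianchi identity, since `ψ₀` is alternating; what is left is the Ricci
contraction.
-/

open scoped BigOperators

noncomputable section

/-- Kronecker delta `δ` on `Fin 7`. -/
def kd (a b : Fin 7) : ℝ := if a = b then 1 else 0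

/-- The elementary alternating 3-tensor supported on permutations of `(i, j, k)`. -/
def trip (i j k a b c : Fin 7) : ℝ :=
  (if a = i ∧ b = j ∧ c = k then (1 : ℝ) else 0)
    + (if a = j ∧ b = k ∧ c = i then (1 : ℝ) else 0)
    + (if a = k ∧ b = i ∧ c = j then (1 : ℝ) else 0)
    - (if a = i ∧ b = k ∧ c = j then (1 : ℝ) else 0)
    - (if a = k ∧ b = j ∧ c = i then (1 : ℝ) else 0)
    - (if a = j ∧ b = i ∧ c = k then (1 : ℝ) else 0)

/-- The standard `G₂` 3-form `φ₀` on `ℝ⁷`.  Indices `0, …, 6` correspond to the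
paper's `1, …, 7`, so this is
`e^{123} + e^{145} + e^{167} + e^{246} - e^{257} - e^{347} - e^{356}`. -/
def phi0 (a b c : Fin 7) : ℝ :=
  trip 0 1 2 a b c + trip 0 3 4 a b c + trip 0 5 6 a b c + trip 1 3 5 a b c
    - trip 1 4 6 a b c - trip 2 3 6 a b c - trip 2 4 5 a b c

/-- The totally antisymmetric Levi-Civita symbol `ε̂` on seven indices,
with `ε̂_{1234567} = 1`. -/
def eps7 (a b c d e f g : Fin 7) : ℝ :=
  if h : Function.Bijective ![a, b, c, d, e, f, g] then
    ((Equiv.Perm.sign (Equiv.ofBijective _ h) : ℤ) : ℝ)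
  else 0

/-- The 4-form `ψ₀ = ⋆φ₀`, the Euclidean Hodge dual of `φ₀`:
`ψ₀ = e^{4567} + e^{2367} + e^{2345} + e^{1357} - e^{1346} - e^{1256} - e^{1247}`. -/
def psi0 (m n p q : Fin 7) : ℝ :=
  (1 / 6 : ℝ) * ∑ r, ∑ s, ∑ t, eps7 m n p q r s t * phi0 r s t

open Finset

section CurvatureContractions

variable {ι : Type*} [Fintype ι] {R : ι → ι → ι → ι → ℝ}

theorem sum_rotate_three (F : ι → ι → ι → ℝ) :
    ∑ x, ∑ y, ∑ z, F x y z = ∑ x, ∑ y, ∑ z, F y z x :=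
  (sum_congr rfl fun _ _ => sum_comm).trans sum_comm

theorem two_mul_sum_antisymm_mul_mixed_eq (hanti₂ : ∀ a b c d, R a b c d = -R a b d c)
    (hbianchi : ∀ a b c d, R a b c d + R a c d b + R a d b c = 0)
    (ω : ι → ι → ℝ) (hω : ∀ c d, ω c d = -ω d c) (a b : ι) :
    2 * ∑ c, ∑ d, ω c d * R a c b d = ∑ c, ∑ d, ω c d * R a b c d := by
  have hsplit : ∑ c, ∑ d, ω c d * R a c b d
      = ∑ c, ∑ d, ω c d * R a b c d - ∑ c, ∑ d, ω c d * R a d c b := by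
    simp only [← sum_sub_distrib]
    refine sum_congr rfl fun c _ => sum_congr rfl fun d _ => ?_
    linear_combination ω c d * hbianchi a c b d - ω c d * hanti₂ a b c d
  have hswap : ∑ c, ∑ d, ω c d * R a d c b = ∑ c, ∑ d, ω c d * R a c b d := by
    rw [sum_comm]
    refine sum_congr rfl fun c _ => sum_congr rfl fun d _ => ?_
    rw [hω d c, hanti₂ a c b d]
    ring
  linarith

theorem sum_cyclic_mul_eq_zero_of_bianchi
    (hbianchi : ∀ a b c d, R a b c d + R a c d b + R a d b c = 0)
    (T : ι → ι → ι → ℝ) (hT : ∀ x y z, T x y z = T y z x) (b : ι) :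
    ∑ x, ∑ y, ∑ z, T x y z * R b x y z = 0 := by
  have h₁ : ∑ x, ∑ y, ∑ z, T x y z * R b y z x
      = ∑ x, ∑ y, ∑ z, T x y z * R b x y z := by
    rw [sum_rotate_three (fun x y z => T x y z * R b x y z)]
    exact sum_congr rfl fun x _ => sum_congr rfl fun y _ => sum_congr rfl fun z _ => by
      rw [hT x y z]
  have h₂ : ∑ x, ∑ y, ∑ z, T x y z * R b z x y
      = ∑ x, ∑ y, ∑ z, T x y z * R b x y z := by
    rw [sum_rotate_three (fun x y z => T x y z * R b z x y)]
    exact sum_congr rfl fun x _ => sum_congr rfl fun y _ => sum_congr rfl fun z _ => by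
      rw [hT x y z]
  have hsum : ∑ x, ∑ y, ∑ z, T x y z * (R b x y z + R b y z x + R b z x y) = 0 := by
    simp only [hbianchi, mul_zero, sum_const_zero]
  simp only [mul_add, sum_add_distrib, h₁, h₂] at hsum
  linarith

theorem ricci_eq_zero_of_phi_traceless [DecidableEq ι]
    (hanti₁ : ∀ a b c d, R a b c d = -R b a c d)
    (hanti₂ : ∀ a b c d, R a b c d = -R a b d c)
    (hpair : ∀ a b c d, R a b c d = R c d a b)
    (hbianchi : ∀ a b c d, R a b c d + R a c d b + R a d b c = 0)
    (φ : ι → ι → ι → ℝ) (ψ : ι → ι → ι → ι → ℝ)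
    (hφ : ∀ e c d, φ e c d = -φ e d c) (hψ : ∀ a b c d, ψ a b c d = ψ c b d a)
    (hφφ : ∀ a b c d, ∑ e, φ e a b * φ e c d =
      (if a = c ∧ b = d then 1 else 0) - (if a = d ∧ b = c then 1 else 0) + ψ a b c d)
    (hR : ∀ a b e, ∑ c, ∑ d, φ e c d * R a b c d = 0) (b g : ι) :
    ∑ a, R a b a g = 0 := by
  have hmixed : ∀ a e, ∑ c, ∑ d, φ e c d * R a c b d = 0 := fun a e => by
    have := two_mul_sum_antisymm_mul_mixed_eq hanti₂ hbianchi (φ e) (hφ e) a b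
    rw [hR a b e] at this
    linarith
  have hcontr : ∑ a, ∑ c, ∑ d, (∑ e, φ e a g * φ e c d) * R a c b d = 0 := by
    calc _ = ∑ a, ∑ e, φ e a g * ∑ c, ∑ d, φ e c d * R a c b d := by
          simp only [sum_mul, mul_sum, mul_assoc]
          exact sum_congr rfl fun a _ => by rw [sum_rotate_three, sum_rotate_three]
      _ = 0 := by simp only [hmixed, mul_zero, sum_const_zero]
  have hδ₁ : ∑ a, ∑ c, ∑ d, (if a = c ∧ g = d then (1 : ℝ) else 0) * R a c b d
      = 0 := by
    have hdiag : ∀ a, R a a b g = 0 := fun a => by linarith [hanti₁ a a b g]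
    simp [ite_and, hdiag]
  have hδ₂ : ∑ a, ∑ c, ∑ d, (if a = d ∧ g = c then (1 : ℝ) else 0) * R a c b d
      = -∑ a, R a b a g := by
    simp only [ite_and, ite_mul, one_mul, zero_mul, sum_ite_eq, mem_univ, if_true]
    rw [← sum_neg_distrib]
    exact sum_congr rfl fun a _ => by linear_combination hpair a g b a + hanti₁ b a a g
  have hψR : ∑ a, ∑ c, ∑ d, ψ a g c d * R a c b d = 0 := by
    calc _ = ∑ a, ∑ c, ∑ d, ψ a g c d * R b d a c := by simp only [hpair _ _ b]
      _ = ∑ a, ∑ c, ∑ d, ψ a g c d * R b a c d := by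
          rw [sum_rotate_three]
          exact sum_congr rfl fun x _ => sum_congr rfl fun y _ => sum_congr rfl fun z _ => by
            rw [hψ x g y z]
      _ = 0 := sum_cyclic_mul_eq_zero_of_bianchi hbianchi (ψ · g · ·) (hψ · g · ·) b
  simp only [hφφ, add_mul, sub_mul, sum_add_distrib, sum_sub_distrib, hδ₁, hδ₂, hψR]
    at hcontr
  linarith

end CurvatureContractions

def tripInt (i j k a b c : Fin 7) : ℤ :=
  (if a = i ∧ b = j ∧ c = k then 1 else 0)
    + (if a = j ∧ b = k ∧ c = i then 1 else 0)
    + (if a = k ∧ b = i ∧ c = j then 1 else 0)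
    - (if a = i ∧ b = k ∧ c = j then 1 else 0)
    - (if a = k ∧ b = j ∧ c = i then 1 else 0)
    - (if a = j ∧ b = i ∧ c = k then 1 else 0)

/-- `phi0` with integer values, so that identities between its components can be decided. -/
def phi0Int (a b c : Fin 7) : ℤ :=
  tripInt 0 1 2 a b c + tripInt 0 3 4 a b c + tripInt 0 5 6 a b c + tripInt 1 3 5 a b c
    - tripInt 1 4 6 a b c - tripInt 2 3 6 a b c - tripInt 2 4 5 a b c

theorem phi0_eq_cast (a b c : Fin 7) : phi0 a b c = phi0Int a b c := by
  simp [phi0, phi0Int, trip, tripInt, apply_ite (Int.cast : ℤ → ℝ)]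

theorem phi0Int_swap : ∀ e c d, phi0Int e c d = -phi0Int e d c := by
  decide

theorem phi0_swap (e c d : Fin 7) : phi0 e c d = -phi0 e d c := by
  simp only [phi0_eq_cast, phi0Int_swap e c d, Int.cast_neg]

/-- Equal to `psi0` by the classical identity
`φ₀_{eab} φ₀_{ecd} = δ_{ac} δ_{bd} - δ_{ad} δ_{bc} + ψ₀_{abcd}`, hence alternating. -/
def phi0DefectInt (a b c d : Fin 7) : ℤ :=
  ∑ e, phi0Int e a b * phi0Int e c d - (if a = c ∧ b = d then 1 else 0)
    + (if a = d ∧ b = c then 1 else 0)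

set_option maxHeartbeats 4000000 in
theorem phi0DefectInt_rotate : ∀ a b c d, phi0DefectInt a b c d = phi0DefectInt c b d a := by
  decide

theorem sum_phi0_mul_phi0 (a b c d : Fin 7) :
    ∑ e, phi0 e a b * phi0 e c d =
      (if a = c ∧ b = d then 1 else 0) - (if a = d ∧ b = c then 1 else 0)
        + (phi0DefectInt a b c d : ℝ) := by
  simp only [phi0_eq_cast, phi0DefectInt]
  push_cast
  ring

/-- algebraic form of Bonan's theorem. If `R` has the symmetries of a
Riemann curvature tensor and takes values in `Sym²(𝔤₂)`, i.e. each 2-form `R_{ab··}`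
satisfies `Σ_{c,d} φ₀_{ecd} R_{abcd} = 0`, then the Ricci contraction vanishes:
`Σ_a R_{abad} = 0` for all `b`, `d`. -/
theorem bonan_ricci_flat (R : Fin 7 → Fin 7 → Fin 7 → Fin 7 → ℝ)
    (hanti₁ : ∀ a b c d, R a b c d = -R b a c d)
    (hanti₂ : ∀ a b c d, R a b c d = -R a b d c)
    (hpair : ∀ a b c d, R a b c d = R c d a b)
    (hbianchi : ∀ a b c d, R a b c d + R a c d b + R a d b c = 0)
    (hg2 : ∀ a b e, ∑ c, ∑ d, phi0 e c d * R a b c d = 0) :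
    ∀ b d, ∑ a, R a b a d = 0 :=
  ricci_eq_zero_of_phi_traceless hanti₁ hanti₂ hpair hbianchi phi0
    (fun a b c d => (phi0DefectInt a b c d : ℝ)) phi0_swap
    (fun a b c d => congrArg Int.cast (phi0DefectInt_rotate a b c d)) sum_phi0_mul_phi0 hg2
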